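/- arXiv:2009.02970 — 5 statements merged into one kernel-verified Lean document; each statement's English description precedes it below -/
import Mathlib

section
/- Let x ∈ ℝ^n and let i, j be chosen independently and uniformly at random from {1,...,n}. Define x' by x'_i = x'_j = (x_i + x_j)/2 and x'_k = x_k for k ≠ i, j. Then the expected mean of squares satisfies E[(1/n)∑_k (x'_k)² | x] = (1/n)·x̄² + (1 − 1/n)·(1/n)∑_k x_k², where x̄ = (1/n)∑_k x_k, and the mean is preserved: x̄' = x̄. -/
/-!
A gossip step on the pair `(i, j)` keeps `∑ x_k` and lowers `∑ x_k²` by `(x_i - x_j)² / 2`.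
Averaged over all ordered pairs, `(x_i - x_j)²` is twice the variance `meanSq x - (mean x)²`,
so the expected mean of squares drops by `(meanSq x - (mean x)²) / n`.
-/

open Finset

noncomputable def mean {n : ℕ} (x : Fin n → ℝ) : ℝ := (∑ k, x k) / n
noncomputable def meanSq {n : ℕ} (x : Fin n → ℝ) : ℝ := (∑ k, (x k)^2) / n

/-- Gossip step: agents `i` and `j` both take the pairwise average. -/
noncomputable def gossip {n : ℕ} (x : Fin n → ℝ) (i j : Fin n) : Fin n → ℝ :=
  fun k => if k = i ∨ k = j then (x i + x j) / 2 else x k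

theorem Finset.sum_sum_sub_sq {ι R : Type*} [CommRing R] (s : Finset ι) (x : ι → R) :
    ∑ i ∈ s, ∑ j ∈ s, (x i - x j) ^ 2 = 2 * (#s * ∑ i ∈ s, x i ^ 2 - (∑ i ∈ s, x i) ^ 2) := by
  simp only [sub_sq', sum_add_distrib, sum_sub_distrib, sum_const, nsmul_eq_mul, ← mul_sum,
    ← sum_mul]
  ring

section Gossip

variable {n : ℕ} (x : Fin n → ℝ) (i j : Fin n)

@[simp]
theorem gossip_self : gossip x i i = x := by
  ext k
  by_cases hk : k = i <;> simp [gossip, hk]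

theorem sum_comp_gossip {M : Type*} [AddCommGroup M] (f : ℝ → M) :
    ∑ k, f (gossip x i j k) = ∑ k, f (x k) - f (x i) - f (x j) + 2 • f ((x i + x j) / 2) := by
  rcases eq_or_ne i j with rfl | hij
  · rw [gossip_self, add_self_div_two]
    abel
  · have hchange : ∑ k, (f (gossip x i j k) - f (x k))
        = (f ((x i + x j) / 2) - f (x i)) + (f ((x i + x j) / 2) - f (x j)) :=
      Fintype.sum_eq_add i j hij (fun k hk => by simp [gossip, hk.1, hk.2]) |>.trans
        (by simp [gossip])
    rw [sum_sub_distrib, sub_eq_iff_eq_add] at hchange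
    rw [hchange]
    abel

theorem sum_gossip : ∑ k, gossip x i j k = ∑ k, x k := by
  have h := sum_comp_gossip x i j id
  simp only [id, two_nsmul] at h
  rw [h]
  ring

theorem mean_gossip : mean (gossip x i j) = mean x := by
  rw [mean, mean, sum_gossip]

theorem meanSq_gossip : meanSq (gossip x i j) = meanSq x - (x i - x j) ^ 2 / (2 * n) := by
  rw [meanSq, meanSq, sum_comp_gossip x i j (· ^ 2), nsmul_eq_mul]
  ring

theorem sum_sum_sub_sq_eq_meanSq_sub_mean_sq (hn : 0 < n) :
    ∑ i, ∑ j, (x i - x j) ^ 2 = 2 * n ^ 2 * (meanSq x - mean x ^ 2) := by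
  have hn' : (n : ℝ) ≠ 0 := by positivity
  rw [sum_sum_sub_sq, meanSq, mean, card_univ, Fintype.card_fin]
  field_simp

end Gossip

theorem gossip_expected_moments {n : ℕ} (hn : 0 < n) (x : Fin n → ℝ) :
    ((∑ i : Fin n, ∑ j : Fin n, meanSq (gossip x i j)) / (n ^ 2 : ℝ)
      = (1 / n) * (mean x) ^ 2 + (1 - 1 / n) * meanSq x)
    ∧ ∀ i j : Fin n, mean (gossip x i j) = mean x := by
  refine ⟨?_, mean_gossip x⟩
  have hn' : (n : ℝ) ≠ 0 := by positivity
  have hdrop : ∑ i, ∑ j, meanSq (gossip x i j)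
      = n ^ 2 * meanSq x - (∑ i, ∑ j, (x i - x j) ^ 2) / (2 * n) := by
    simp only [meanSq_gossip, sum_sub_distrib, sum_const, card_univ, Fintype.card_fin,
      nsmul_eq_mul, ← sum_div]
    ring
  rw [hdrop, sum_sum_sub_sq_eq_meanSq_sub_mean_sq x hn]
  field_simp
  ring
end

section
/- Under an arrival event in a system of n agents, the expected variance satisfies E[Var(x') | x] = (n/(n+1))·(Var(x) + (σ² + x̄²)/(n+1)), where x' ∈ ℝ^{n+1} is the state after the arriving agent (independent, mean 0, variance σ²) joins. -/
/-!
Appending a value `t` to `x ∈ ℝⁿ` updates the population variance by Welford's formula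
`Var(x') = n/(n+1) · (Var(x) + (t - x̄)²/(n+1))`. The right-hand side is affine in `(t - x̄)²`,
and for the arriving value `v` with mean 0 and second moment `σ²` one has `E[(v - x̄)²] = σ² + x̄²`.
-/

open Finset MeasureTheory

noncomputable def varOf {n : ℕ} (x : Fin n → ℝ) : ℝ := (∑ k, (x k - mean x) ^ 2) / n

lemma sum_eq_card_mul_mean {n : ℕ} (x : Fin n → ℝ) : ∑ k, x k = n * mean x := by
  rcases n.eq_zero_or_pos with rfl | hn
  · simp
  · rw [mean, mul_div_cancel₀ _ (by positivity)]

lemma card_mul_varOf {n : ℕ} (x : Fin n → ℝ) :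
    n * varOf x = ∑ k, x k ^ 2 - n * mean x ^ 2 := by
  rcases n.eq_zero_or_pos with rfl | hn
  · simp
  rw [varOf, mul_div_cancel₀ _ (by positivity)]
  simp only [sub_sq, sum_add_distrib, sum_sub_distrib, ← sum_mul, ← mul_sum, sum_const,
    card_univ, Fintype.card_fin, nsmul_eq_mul, sum_eq_card_mul_mean x]
  ring

lemma varOf_snoc {n : ℕ} (x : Fin n → ℝ) (t : ℝ) :
    varOf (Fin.snoc x t : Fin (n + 1) → ℝ)
      = (n / (n + 1)) * (varOf x + (t - mean x) ^ 2 / (n + 1)) := by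
  have hsum := sum_eq_card_mul_mean (Fin.snoc x t : Fin (n + 1) → ℝ)
  have hvar := card_mul_varOf (Fin.snoc x t : Fin (n + 1) → ℝ)
  simp only [Fin.sum_univ_castSucc, Fin.snoc_castSucc, Fin.snoc_last, sum_eq_card_mul_mean x]
    at hsum hvar
  push_cast at hsum hvar
  have hn1 : (n : ℝ) + 1 ≠ 0 := by positivity
  have hmean : mean (Fin.snoc x t : Fin (n + 1) → ℝ) = (n * mean x + t) / (n + 1) := by
    rw [eq_div_iff hn1]
    linarith
  have hvar' : varOf (Fin.snoc x t : Fin (n + 1) → ℝ)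
      = (∑ k, x k ^ 2 + t ^ 2 - (n + 1) * mean (Fin.snoc x t : Fin (n + 1) → ℝ) ^ 2) / (n + 1) := by
    rw [eq_div_iff hn1]
    linarith
  rw [hvar', hmean]
  field_simp
  linear_combination -(n + 1) * card_mul_varOf x

section SecondMoment

variable {Ω : Type*} [MeasurableSpace Ω] {μ : Measure Ω} {v : Ω → ℝ}

lemma integrable_sub_const_sq [IsFiniteMeasure μ] (hv : Integrable v μ)
    (hv2 : Integrable (fun ω => v ω ^ 2) μ) (c : ℝ) :
    Integrable (fun ω => (v ω - c) ^ 2) μ := by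
  simp only [sub_sq]
  exact (hv2.sub ((hv.const_mul 2).mul_const c)).add (integrable_const _)

lemma integral_sub_const_sq [IsProbabilityMeasure μ] (hv : Integrable v μ)
    (hv2 : Integrable (fun ω => v ω ^ 2) μ) (c : ℝ) :
    ∫ ω, (v ω - c) ^ 2 ∂μ = ∫ ω, v ω ^ 2 ∂μ - 2 * c * ∫ ω, v ω ∂μ + c ^ 2 := by
  simp only [sub_sq]
  rw [integral_add (f := fun ω => v ω ^ 2 - 2 * v ω * c)
      (hv2.sub ((hv.const_mul 2).mul_const c)) (integrable_const _),
    integral_sub hv2 ((hv.const_mul 2).mul_const c), integral_mul_const, integral_const_mul,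
    integral_const, probReal_univ, one_smul]
  ring

end SecondMoment

theorem arrival_expected_variance_general {n : ℕ} (x : Fin n → ℝ)
    {Ω : Type*} [MeasureSpace Ω] [IsProbabilityMeasure (volume : Measure Ω)]
    (v : Ω → ℝ) (σ : ℝ)
    (hv1 : ∫ ω, v ω = 0) (hv2 : ∫ ω, (v ω) ^ 2 = σ ^ 2)
    (hint : Integrable v) (hint2 : Integrable (fun ω => (v ω) ^ 2)) :
    (∫ ω, varOf (Fin.snoc x (v ω)))
      = ((n : ℝ) / ((n : ℝ) + 1)) * (varOf x + (σ ^ 2 + (mean x) ^ 2) / ((n : ℝ) + 1)) := by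
  have hdev : ∫ ω, (v ω - mean x) ^ 2 = σ ^ 2 + mean x ^ 2 := by
    rw [integral_sub_const_sq hint hint2, hv1, hv2]
    ring
  simp only [varOf_snoc]
  rw [integral_const_mul,
    integral_add (integrable_const _) ((integrable_sub_const_sq hint hint2 _).div_const _),
    integral_const, probReal_univ, one_smul, integral_div, hdev]

theorem arrival_expected_variance {n : ℕ} (hn : 0 < n) (x : Fin n → ℝ)
    {Ω : Type*} [MeasureSpace Ω] [IsProbabilityMeasure (volume : Measure Ω)]
    (v : Ω → ℝ) (σ : ℝ)
    (hv1 : ∫ ω, v ω = 0) (hv2 : ∫ ω, (v ω) ^ 2 = σ ^ 2)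
    (hint : Integrable v) (hint2 : Integrable (fun ω => (v ω) ^ 2)) :
    (∫ ω, varOf (Fin.snoc x (v ω)))
      = ((n : ℝ) / ((n : ℝ) + 1)) * (varOf x + (σ ^ 2 + (mean x) ^ 2) / ((n : ℝ) + 1)) :=
  arrival_expected_variance_general x v σ hv1 hv2 hint hint2
end

section
/- Let A be an N×N doubly stochastic matrix, let ξ(0) ∈ ℝ^N have i.i.d. entries with mean 0 and variance σ², and let ξ = A·ξ(0). Then for any subset S ⊆ {1,...,N}, E[(∑_{i∈S} ξ_i)²] ≤ |S|·σ². -/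
/-!
Summing `ξ = A ξ(0)` over `S` gives `∑_j c_j ξ(0)_j`, where `c_j = ∑_{i ∈ S} A i j` is a partial
column sum. For independent centred variables the second moment of such a combination is
`σ² ∑_j c_j²`. Double stochasticity gives `0 ≤ c_j ≤ 1`, hence `c_j² ≤ c_j`, and `∑_j c_j = |S|`.
-/

open Finset MeasureTheory ProbabilityTheory Matrix

theorem Matrix.sum_mulVec_eq_sum_colSum_mul {R m n : Type*} [Fintype n]
    [NonUnitalNonAssocSemiring R] (A : Matrix m n R) (x : n → R) (S : Finset m) :
    ∑ i ∈ S, (A *ᵥ x) i = ∑ j, (∑ i ∈ S, A i j) * x j := by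
  simp only [mulVec, dotProduct, Finset.sum_mul]
  exact Finset.sum_comm

theorem Matrix.sum_colPartialSum_eq_card {R m n : Type*} [Fintype n] [AddCommMonoidWithOne R]
    (A : Matrix m n R) (S : Finset m) (hrow : ∀ i, ∑ j, A i j = 1) :
    ∑ j, ∑ i ∈ S, A i j = S.card := by
  rw [Finset.sum_comm]
  simp [hrow]

theorem Matrix.colPartialSum_le_one {R m n : Type*} [Fintype m] [AddCommMonoid R] [One R]
    [PartialOrder R] [IsOrderedAddMonoid R] (A : Matrix m n R) (S : Finset m)
    (hpos : ∀ i j, 0 ≤ A i j) (hcol : ∀ j, ∑ i, A i j = 1) (j : n) :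
    ∑ i ∈ S, A i j ≤ 1 :=
  hcol j ▸ Finset.sum_le_sum_of_subset_of_nonneg (Finset.subset_univ S) fun i _ _ => hpos i j

theorem integral_sq_sum_mul_of_pairwise_indepFun {Ω ι : Type*} {mΩ : MeasurableSpace Ω}
    {μ : Measure Ω} [IsProbabilityMeasure μ] {X : ι → Ω → ℝ}
    (hX : ∀ i, MemLp (X i) 2 μ) (hindep : Pairwise fun i j => X i ⟂ᵢ[μ] X j)
    (hmean : ∀ i, μ[X i] = 0) (c : ι → ℝ) (s : Finset ι) :
    ∫ ω, (∑ i ∈ s, c i * X i ω) ^ 2 ∂μ = ∑ i ∈ s, c i ^ 2 * ∫ ω, X i ω ^ 2 ∂μ := by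
  set Y : ι → Ω → ℝ := fun i ω => c i * X i ω
  have hY : ∀ i, MemLp (Y i) 2 μ := fun i => (hX i).const_mul (c i)
  have hY_indep : Set.Pairwise ↑s fun i j => Y i ⟂ᵢ[μ] Y j := fun i _ j _ hij =>
    (hindep hij).comp (measurable_const_mul (c i)) (measurable_const_mul (c j))
  have hsum_meas : AEMeasurable (∑ i ∈ s, Y i) μ :=
    (memLp_finsetSum' s fun i _ => hY i).aemeasurable
  have hsum_mean : μ[∑ i ∈ s, Y i] = 0 := by
    simp only [Finset.sum_apply]
    rw [integral_finsetSum s fun i _ => (hY i).integrable one_le_two]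
    simp [Y, integral_const_mul, hmean]
  have hvar_sum := IndepFun.variance_sum (fun i _ => hY i) hY_indep
  rw [variance_of_integral_eq_zero hsum_meas hsum_mean] at hvar_sum
  simp only [Finset.sum_apply] at hvar_sum
  rw [hvar_sum]
  refine Finset.sum_congr rfl fun i _ => ?_
  rw [variance_const_mul, variance_of_integral_eq_zero (hX i).aemeasurable (hmean i)]

theorem doubly_stochastic_subset_sum_bound_general {N : ℕ} (A : Matrix (Fin N) (Fin N) ℝ)
    (hpos : ∀ i j, 0 ≤ A i j) (hrow : ∀ i, ∑ j, A i j = 1) (hcol : ∀ j, ∑ i, A i j = 1)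
    {Ω : Type*} [MeasureSpace Ω] [IsProbabilityMeasure (volume : Measure Ω)]
    (ξ0 : Fin N → Ω → ℝ) (σ : ℝ)
    (hmeas : ∀ i, Measurable (ξ0 i))
    (hindep : ProbabilityTheory.iIndepFun ξ0 volume)
    (hmean : ∀ i, ∫ ω, ξ0 i ω = 0) (hvar : ∀ i, ∫ ω, (ξ0 i ω) ^ 2 = σ ^ 2)
    (hint2 : ∀ i, Integrable (fun ω => (ξ0 i ω) ^ 2))
    (S : Finset (Fin N)) :
    ∫ ω, (∑ i ∈ S, A.mulVec (fun k => ξ0 k ω) i) ^ 2 ≤ (S.card : ℝ) * σ ^ 2 := by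
  set c : Fin N → ℝ := fun j => ∑ i ∈ S, A i j
  have hL2 : ∀ i, MemLp (ξ0 i) 2 :=
    fun i => (memLp_two_iff_integrable_sq (hmeas i).aestronglyMeasurable).2 (hint2 i)
  have hc_sq_le : ∀ j, c j ^ 2 ≤ c j := fun j =>
    pow_le_of_le_one (sum_nonneg fun i _ => hpos i j) (A.colPartialSum_le_one S hpos hcol j)
      two_ne_zero
  calc ∫ ω, (∑ i ∈ S, A.mulVec (fun k => ξ0 k ω) i) ^ 2
      = ∫ ω, (∑ j, c j * ξ0 j ω) ^ 2 := by simp only [sum_mulVec_eq_sum_colSum_mul, c]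
    _ = ∑ j, c j ^ 2 * σ ^ 2 := by
      rw [integral_sq_sum_mul_of_pairwise_indepFun hL2 (fun _ _ => hindep.indepFun) hmean]
      simp only [hvar]
    _ ≤ ∑ j, c j * σ ^ 2 :=
      sum_le_sum fun j _ => mul_le_mul_of_nonneg_right (hc_sq_le j) (sq_nonneg σ)
    _ = S.card * σ ^ 2 := by rw [← sum_mul, A.sum_colPartialSum_eq_card S hrow]

/-- `A` doubly stochastic, `ξ(0)` i.i.d. with mean 0 and variance `σ²`, `ξ = A·ξ(0)`:
then `E[(∑_{i∈S} ξ_i)²] ≤ |S|·σ²` for any subset `S` of coordinates. -/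
theorem doubly_stochastic_subset_sum_bound {N : ℕ} (A : Matrix (Fin N) (Fin N) ℝ)
    (hpos : ∀ i j, 0 ≤ A i j) (hrow : ∀ i, ∑ j, A i j = 1) (hcol : ∀ j, ∑ i, A i j = 1)
    {Ω : Type*} [MeasureSpace Ω] [IsProbabilityMeasure (volume : Measure Ω)]
    (ξ0 : Fin N → Ω → ℝ) (σ : ℝ)
    (hmeas : ∀ i, Measurable (ξ0 i))
    (hindep : ProbabilityTheory.iIndepFun ξ0 volume)
    (hident : ∀ i j, MeasureTheory.Measure.map (ξ0 i) volume = Measure.map (ξ0 j) volume)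
    (hmean : ∀ i, ∫ ω, ξ0 i ω = 0) (hvar : ∀ i, ∫ ω, (ξ0 i ω) ^ 2 = σ ^ 2)
    (hint : ∀ i, Integrable (ξ0 i)) (hint2 : ∀ i, Integrable (fun ω => (ξ0 i ω) ^ 2))
    (S : Finset (Fin N)) :
    ∫ ω, (∑ i ∈ S, A.mulVec (fun k => ξ0 k ω) i) ^ 2 ≤ (S.card : ℝ) * σ ^ 2 :=
  doubly_stochastic_subset_sum_bound_general A hpos hrow hcol ξ0 σ hmeas hindep hmean hvar hint2 S
end

section
/- Let x ∈ ℝ^n with n ≥ 2 and let x̃ ∈ ℝ^{n−1} be obtained from x by removing an arbitrary (adversarially chosen) entry. Then Var(x̃) ≤ (n/(n−1))·Var(x). -/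
/-!
The mean minimizes `c ↦ ∑ (y k - c)²`. Hence the squared deviations of `x̃` about its own mean
sum to at most those of `x̃` about the mean of `x`, which is at most the corresponding sum for `x`,
since removing an entry only drops a square. The factor `n / (n - 1)` is just the change of
normalization from `1 / n` to `1 / (n - 1)`.
-/

open Finset

/-- The vector `x` with its `j`-th entry removed. -/
def removeAt {n : ℕ} (j : Fin (n + 1)) (x : Fin (n + 1) → ℝ) : Fin n → ℝ :=
  fun k => x (j.succAbove k)

lemma sum_eq_mul_mean {m : ℕ} (y : Fin m → ℝ) : ∑ k, y k = m * mean y := by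
  obtain rfl | hm := Nat.eq_zero_or_pos m
  · simp
  · rw [mean, mul_div_cancel₀ _ (by positivity)]

lemma sum_sq_sub_eq_sum_sq_sub_mean_add {m : ℕ} (y : Fin m → ℝ) (c : ℝ) :
    ∑ k, (y k - c) ^ 2 = ∑ k, (y k - mean y) ^ 2 + m * (mean y - c) ^ 2 := by
  have hexpand : ∀ a : ℝ, ∑ k, (y k - a) ^ 2 = ∑ k, y k ^ 2 - 2 * a * ∑ k, y k + m * a ^ 2 := by
    intro a
    rw [sum_congr rfl fun k _ => (by ring : (y k - a) ^ 2 = y k ^ 2 - 2 * a * y k + a ^ 2)]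
    simp only [sum_add_distrib, sum_sub_distrib, ← mul_sum, sum_const, card_univ,
      Fintype.card_fin, nsmul_eq_mul]
  rw [hexpand, hexpand, sum_eq_mul_mean y]
  ring

lemma sum_sq_sub_mean_le {m : ℕ} (y : Fin m → ℝ) (c : ℝ) :
    ∑ k, (y k - mean y) ^ 2 ≤ ∑ k, (y k - c) ^ 2 := by
  rw [sum_sq_sub_eq_sum_sq_sub_mean_add y c]
  exact le_add_of_nonneg_right (by positivity)

lemma sum_sq_removeAt_sub_le {n : ℕ} (j : Fin (n + 1)) (x : Fin (n + 1) → ℝ) (c : ℝ) :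
    ∑ k, (removeAt j x k - c) ^ 2 ≤ ∑ i, (x i - c) ^ 2 := by
  rw [Fin.sum_univ_succAbove (fun i => (x i - c) ^ 2) j]
  exact le_add_of_nonneg_left (sq_nonneg _)

lemma sum_sq_removeAt_sub_mean_le {n : ℕ} (j : Fin (n + 1)) (x : Fin (n + 1) → ℝ) :
    ∑ k, (removeAt j x k - mean (removeAt j x)) ^ 2 ≤ ∑ i, (x i - mean x) ^ 2 :=
  (sum_sq_sub_mean_le _ (mean x)).trans (sum_sq_removeAt_sub_le j x (mean x))

theorem adversarial_departure_variance_general {n : ℕ} (x : Fin (n + 1) → ℝ)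
    (j : Fin (n + 1)) :
    varOf (removeAt j x) ≤ (((n : ℝ) + 1) / n) * varOf x := by
  have hrescale : (((n : ℝ) + 1) / n) * varOf x = (∑ i, (x i - mean x) ^ 2) / n := by
    rw [varOf, Nat.cast_succ, div_mul_div_comm, mul_comm, mul_div_mul_right _ _ (by positivity)]
  rw [hrescale, varOf]
  exact div_le_div_of_nonneg_right (sum_sq_removeAt_sub_mean_le j x) n.cast_nonneg

/-- Adversarial departure: removing an arbitrary entry of `x ∈ ℝ^{n+1}` (with `n ≥ 1`)
increases the variance by at most a factor `(n+1)/n`. -/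
theorem adversarial_departure_variance {n : ℕ} (hn : 1 ≤ n) (x : Fin (n + 1) → ℝ)
    (j : Fin (n + 1)) :
    varOf (removeAt j x) ≤ (((n : ℝ) + 1) / n) * varOf x :=
  adversarial_departure_variance_general x j
end

section
/- Let (V*_j)_{j∈ℕ} be nonnegative reals with V*_0 = 0 satisfying (n_0 + j + γ)·V*_j ≤ (j−1)·V*_{j−1} + (1 − 1/j²)·n_0·V*_{j+1} + σ² for all j ≥ 1, let π_j = (n_0^j/j!)e^{−n_0}, and suppose (z_j)_{j∈ℕ} is a nonnegative sequence with z_0 = 0 satisfying (n_0 + j + γ)·z_j ≥ j·z_{j+1} + (1 − 1/(j−1)²)·n_0·z_{j−1} + π_j for all j ≥ 1 (the term with z_{j−1} interpreted as 0 for j = 1), with ∑ z_j < ∞. Assume also V*_j is uniformly bounded. Then ∑_{j≥0} π_j·V*_j ≤ (∑_{j≥0} z_j)·σ². -/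
/-!
Weak LP duality. Multiplying the primal inequality of row `j` by `z j ≥ 0` and the dual one by
`V j ≥ 0` and summing over `1 ≤ j ≤ N`, the tridiagonal terms telescope (the dual system is the
transpose of the primal one), leaving `∑ π_j V_j ≤ σ² ∑ z_j` up to the boundary term
`(1 - 1/N²) n₀ z_N V_{N+1}`, which tends to `0` because `V` is bounded and `z` summable.
-/

open Finset Filter Topology

theorem sum_range_mul_le_of_primal_dual {a b c π V z : ℕ → ℝ} {s : ℝ}
    (hV : ∀ j, 0 ≤ V (j + 1)) (hz : ∀ j, 0 ≤ z (j + 1))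
    (hprimal : ∀ j, a (j + 1) * V (j + 1) ≤ b (j + 1) * V j + c (j + 1) * V (j + 2) + s)
    (hdual : ∀ j, b (j + 2) * z (j + 2) + c j * z j + π (j + 1) ≤ a (j + 1) * z (j + 1))
    (N : ℕ) :
    ∑ j ∈ range N, π (j + 1) * V (j + 1)
      ≤ s * ∑ j ∈ range N, z (j + 1) + (b 1 * z 1 * V 0 - b (N + 1) * z (N + 1) * V N)
        + (c N * z N * V (N + 1) - c 0 * z 0 * V 1) := by
  set f : ℕ → ℝ := fun j ↦ b (j + 1) * z (j + 1) * V j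
  set g : ℕ → ℝ := fun j ↦ c j * z j * V (j + 1)
  have hrow : ∀ j, π (j + 1) * V (j + 1)
      ≤ s * z (j + 1) + (f j - f (j + 1)) + (g (j + 1) - g j) := fun j ↦ by
    have hp := mul_le_mul_of_nonneg_left (hprimal j) (hz j)
    have hd := mul_le_mul_of_nonneg_left (hdual j) (hV j)
    simp only [f, g]
    linarith
  calc ∑ j ∈ range N, π (j + 1) * V (j + 1)
      ≤ ∑ j ∈ range N, (s * z (j + 1) + (f j - f (j + 1)) + (g (j + 1) - g j)) :=
        sum_le_sum fun j _ ↦ hrow j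
    _ = _ := by rw [sum_add_distrib, sum_add_distrib, ← mul_sum, sum_range_sub', sum_range_sub]

theorem tsum_le_of_sum_range_le_add {f e : ℕ → ℝ} {T : ℝ} (hf : Summable f)
    (he : Tendsto e atTop (𝓝 0)) (h : ∀ N, ∑ i ∈ range N, f i ≤ T + e N) : ∑' i, f i ≤ T :=
  le_of_tendsto_of_tendsto' hf.hasSum.tendsto_sum_nat (by simpa using he.const_add T) h

theorem tsum_mul_le_of_primal_dual {a b c π V z : ℕ → ℝ} {s K C : ℝ}
    (hV : ∀ j, 0 ≤ V j) (hz : ∀ j, 0 ≤ z j) (hz0 : z 0 = 0) (hs : 0 ≤ s)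
    (hb1 : b 1 = 0) (hb : ∀ j, 0 ≤ b (j + 1)) (hK : 0 ≤ K) (hc : ∀ j, c j ≤ K)
    (hVC : ∀ j, V j ≤ C) (hzsum : Summable z) (hπV : Summable fun j ↦ π (j + 1) * V (j + 1))
    (hprimal : ∀ j, a (j + 1) * V (j + 1) ≤ b (j + 1) * V j + c (j + 1) * V (j + 2) + s)
    (hdual : ∀ j, b (j + 2) * z (j + 2) + c j * z j + π (j + 1) ≤ a (j + 1) * z (j + 1)) :
    ∑' j, π (j + 1) * V (j + 1) ≤ s * ∑' j, z j := by
  refine tsum_le_of_sum_range_le_add hπV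
    (by simpa using hzsum.tendsto_atTop_zero.const_mul (K * C)) fun N ↦ ?_
  have hzpartial : ∑ j ∈ range N, z (j + 1) ≤ ∑' j, z j := by
    simpa [sum_range_succ', hz0] using hzsum.sum_le_tsum (range (N + 1)) fun j _ ↦ hz j
  have hboundary : c N * z N * V (N + 1) ≤ K * C * z N := by
    nlinarith [mul_nonneg (hz N) (hV (N + 1)), mul_nonneg hK (hz N), hVC (N + 1), hc N]
  have := sum_range_mul_le_of_primal_dual (fun j ↦ hV _) (fun j ↦ hz _) hprimal hdual N
  rw [hb1, hz0] at this
  linarith [mul_le_mul_of_nonneg_left hzpartial hs,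
    mul_nonneg (mul_nonneg (hb N) (hz (N + 1))) (hV N)]

theorem steady_state_variance_duality_bound_general (n0 γ σ : ℝ)
    (hn0 : 0 < n0)
    (V z : ℕ → ℝ)
    (hVnn : ∀ j, 0 ≤ V j) (hV0 : V 0 = 0)
    (hVineq : ∀ j : ℕ, 1 ≤ j →
      (n0 + j + γ) * V j
        ≤ ((j : ℝ) - 1) * V (j - 1) + (1 - 1 / (j : ℝ) ^ 2) * n0 * V (j + 1) + σ ^ 2)
    (hznn : ∀ j, 0 ≤ z j) (hz0 : z 0 = 0)
    (hz1 : (n0 + 1 + γ) * z 1 ≥ 1 * z 2 + (n0 ^ 1 / (Nat.factorial 1)) * Real.exp (-n0))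
    (hzineq : ∀ j : ℕ, 2 ≤ j →
      (n0 + j + γ) * z j
        ≥ j * z (j + 1) + (1 - 1 / ((j : ℝ) - 1) ^ 2) * n0 * z (j - 1)
          + (n0 ^ j / (Nat.factorial j)) * Real.exp (-n0))
    (hzsum : Summable z) (hVbd : ∃ C, ∀ j, V j ≤ C) :
    ∑' j : ℕ, (n0 ^ j / (Nat.factorial j)) * Real.exp (-n0) * V j
      ≤ (∑' j : ℕ, z j) * σ ^ 2 := by
  obtain ⟨C, hC⟩ := hVbd
  set π : ℕ → ℝ := fun j ↦ n0 ^ j / (Nat.factorial j) * Real.exp (-n0)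
  -- `c 0 = n0` because `1 / 0 = 0`; it only ever multiplies `z 0 = 0`.
  set c : ℕ → ℝ := fun j ↦ (1 - 1 / (j : ℝ) ^ 2) * n0
  have hπV : Summable fun j ↦ π j * V j :=
    .of_nonneg_of_le (fun j ↦ mul_nonneg (by positivity) (hVnn j))
      (fun j ↦ mul_le_mul_of_nonneg_left (hC j) (by positivity))
      ((Real.summable_pow_div_factorial n0).mul_right _ |>.mul_right C)
  have hc (j : ℕ) : c j ≤ n0 := by
    simp only [c]; nlinarith [show 0 ≤ 1 / (j : ℝ) ^ 2 by positivity]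
  have hprimal (j : ℕ) : (n0 + ↑(j + 1) + γ) * V (j + 1)
      ≤ (↑(j + 1) - 1) * V j + c (j + 1) * V (j + 2) + σ ^ 2 := by
    simpa [c] using hVineq (j + 1) (by omega)
  have hdual : ∀ j, (↑(j + 2) - 1) * z (j + 2) + c j * z j + π (j + 1)
      ≤ (n0 + ↑(j + 1) + γ) * z (j + 1)
    | 0 => by norm_num [c, π, hz0] at hz1 ⊢; linarith
    | j + 1 => by
      have := hzineq (j + 2) (by omega)
      simp only [c, π]
      push_cast at this ⊢
      ring_nf at this ⊢
      linarith
  rw [hπV.tsum_eq_zero_add, hV0, mul_zero, zero_add, mul_comm]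
  exact tsum_mul_le_of_primal_dual (a := fun j ↦ n0 + j + γ) (b := fun j ↦ (j : ℝ) - 1) hVnn hznn
    hz0 (sq_nonneg σ) (by simp) (fun j ↦ by simp) hn0.le hc hC hzsum
    ((summable_nat_add_iff 1).mpr hπV) hprimal hdual

/-- Weak-duality bound for the steady-state conditional variances of the open system:
any nonnegative feasible dual sequence `z` yields `∑ π_j V_j ≤ (∑ z_j)·σ²`. -/
theorem steady_state_variance_duality_bound (n0 γ σ : ℝ)
    (hn0 : 0 < n0) (hγ : 0 ≤ γ) (hσ : 0 ≤ σ)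
    (V z : ℕ → ℝ)
    (hVnn : ∀ j, 0 ≤ V j) (hV0 : V 0 = 0)
    (hVineq : ∀ j : ℕ, 1 ≤ j →
      (n0 + j + γ) * V j
        ≤ ((j : ℝ) - 1) * V (j - 1) + (1 - 1 / (j : ℝ) ^ 2) * n0 * V (j + 1) + σ ^ 2)
    (hznn : ∀ j, 0 ≤ z j) (hz0 : z 0 = 0)
    (hz1 : (n0 + 1 + γ) * z 1 ≥ 1 * z 2 + (n0 ^ 1 / (Nat.factorial 1)) * Real.exp (-n0))
    (hzineq : ∀ j : ℕ, 2 ≤ j →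
      (n0 + j + γ) * z j
        ≥ j * z (j + 1) + (1 - 1 / ((j : ℝ) - 1) ^ 2) * n0 * z (j - 1)
          + (n0 ^ j / (Nat.factorial j)) * Real.exp (-n0))
    (hzsum : Summable z) (hVbd : ∃ C, ∀ j, V j ≤ C) :
    ∑' j : ℕ, (n0 ^ j / (Nat.factorial j)) * Real.exp (-n0) * V j
      ≤ (∑' j : ℕ, z j) * σ ^ 2 :=
  steady_state_variance_duality_bound_general n0 γ σ hn0 V z hVnn hV0 hVineq hznn hz0 hz1 hzineq
    hzsum hVbd
end
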